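/- For every integer n ≥ 1, gauging the ℤ_n×ℤ_n symmetry exchanges the trivial phase with the fully symmetry-broken phase on the torus: (S (Z 0)) (A, B) equals (n : ℂ)^2 if A = 0 and B = 0, and equals 0 otherwise (this is the torus partition function of the phase with n² symmetry-breaking ground states), and applying S to this function returns Z 0. -/
import Mathlib


/-!
Torus partition functions of (1+1)d theories with ℤ_n×ℤ_n symmetry,
modeled as functions `GG n × GG n → ℂ` where `GG n := ZMod n × ZMod n`
records the holonomies of each ℤ_n background gauge field around the
two cycles of the torus.
-/

noncomputable section

/-- The holonomy group of one ℤ_n background gauge field on the torus. -/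
abbrev GG (n : ℕ) := ZMod n × ZMod n

/-- The intersection pairing `ε a b = a₁ b₂ - a₂ b₁`. -/
def epsPair {n : ℕ} (a b : GG n) : ZMod n := a.1 * b.2 - a.2 * b.1

/-- The character `e x = exp(2πi x.val / n)`. -/
def eChar (n : ℕ) (x : ZMod n) : ℂ :=
  Complex.exp (2 * Real.pi * Complex.I * (x.val : ℂ) / n)

lemma eChar_eq_std (n : ℕ) [NeZero n] (x : ZMod n) : eChar n x = ZMod.stdAddChar x := by
  have hx : ((x.val : ℤ) : ZMod n) = x := by
    push_cast
    simp [ZMod.natCast_val, ZMod.cast_id']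
  have h := ZMod.stdAddChar_coe (N := n) (x.val : ℤ)
  rw [hx] at h
  rw [eChar, h]
  norm_num

lemma eChar_add (n : ℕ) [NeZero n] (u v : ZMod n) :
    eChar n (u + v) = eChar n u * eChar n v := by
  simp [eChar_eq_std, AddChar.map_add_eq_mul]

lemma eChar_zero (n : ℕ) [NeZero n] : eChar n 0 = 1 := by
  simp [eChar_eq_std]

lemma sum_eChar_mul (n : ℕ) [NeZero n] (c : ZMod n) :
    ∑ x : ZMod n, eChar n (c * x) = if c = 0 then (n : ℂ) else 0 := by
  classical
  have h : ∀ x, eChar n (c * x) = ((ZMod.stdAddChar (N := n)).mulShift c) x := fun x => by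
    rw [AddChar.mulShift_apply, eChar_eq_std]
  simp_rw [h]
  rw [AddChar.sum_eq_ite]
  by_cases hc : c = 0
  · simp [hc, AddChar.mulShift_zero, AddChar.one_eq_zero, ZMod.card]
  · rw [if_neg hc, if_neg]
    rw [← AddChar.one_eq_zero]
    exact ZMod.isPrimitive_stdAddChar n hc

lemma sum_eChar_eps (n : ℕ) [NeZero n] (B : GG n) :
    ∑ a : GG n, eChar n (epsPair a B) = if B = 0 then (n : ℂ) ^ 2 else 0 := by
  classical
  rw [Fintype.sum_prod_type]
  have h : ∀ x y : ZMod n, eChar n (epsPair (x, y) B)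
      = eChar n (B.2 * x) * eChar n ((-B.1) * y) := by
    intro x y
    rw [← eChar_add, show B.2 * x + (-B.1) * y = epsPair (x, y) B by
      show B.2 * x + (-B.1) * y = x * B.2 - y * B.1; ring]
  simp_rw [h, ← Finset.mul_sum, ← Finset.sum_mul, sum_eChar_mul, neg_eq_zero]
  rcases B with ⟨B1, B2⟩
  by_cases h1 : B1 = 0 <;> by_cases h2 : B2 = 0 <;>
    simp [h1, h2, Prod.ext_iff, sq]

/-- The gauging operation `S` on torus partition functions. -/
def gaugeS (n : ℕ) [NeZero n] (f : GG n × GG n → ℂ) : GG n × GG n → ℂ :=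
  fun P => (n : ℂ)⁻¹ * (n : ℂ)⁻¹ *
    ∑ a : GG n, ∑ b : GG n, f (a, b) * eChar n (epsPair a P.2 + epsPair b P.1)

/-- The SPT-stacking operation `T` on torus partition functions. -/
def stackT (n : ℕ) (f : GG n × GG n → ℂ) : GG n × GG n → ℂ :=
  fun P => f P * eChar n (epsPair P.1 P.2)

/-- The inverse SPT-stacking operation `T⁻¹` on torus partition functions. -/
def stackTinv (n : ℕ) (f : GG n × GG n → ℂ) : GG n × GG n → ℂ :=
  fun P => f P * eChar n (-(epsPair P.1 P.2))

/-- The torus partition function of the level-`k` ℤ_n×ℤ_n SPT phase. -/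
def Zspt (n : ℕ) (k : ZMod n) : GG n × GG n → ℂ :=
  fun P => eChar n (k * epsPair P.1 P.2)

/-- gauging the ℤ_n×ℤ_n symmetry exchanges the trivial phase with
the fully symmetry-broken phase on the torus: `S (Z 0)` is the torus partition
function of the phase with `n²` symmetry-breaking ground states, and applying
`S` to the latter returns `Z 0`. -/
theorem gaugeS_trivial_SSB (n : ℕ) [NeZero n] :
    (∀ A B : GG n, gaugeS n (Zspt n 0) (A, B) =
      if A = 0 ∧ B = 0 then (n : ℂ) ^ 2 else 0) ∧
    gaugeS n (fun P => if P.1 = 0 ∧ P.2 = 0 then (n : ℂ) ^ 2 else 0) = Zspt n 0 := by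
  have hn : (n : ℂ) ≠ 0 := Nat.cast_ne_zero.mpr (NeZero.ne n)
  constructor
  · intro A B
    have key : ∀ a b : GG n, Zspt n 0 (a, b) * eChar n (epsPair a B + epsPair b A)
        = eChar n (epsPair a B) * eChar n (epsPair b A) := by
      intro a b
      simp [Zspt, eChar_zero, eChar_add]
    simp only [gaugeS, key]
    simp_rw [← Finset.mul_sum, ← Finset.sum_mul, sum_eChar_eps]
    by_cases hA : A = 0 <;> by_cases hB : B = 0 <;>
      simp [hA, hB] <;> field_simp <;> ring
  · funext P
    have key : ∀ a b : GG n,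
        (if a = 0 ∧ b = 0 then (n : ℂ) ^ 2 else 0) * eChar n (epsPair a P.2 + epsPair b P.1)
        = if a = 0 then (if b = 0 then (n : ℂ) ^ 2 else 0) else 0 := by
      intro a b
      by_cases ha : a = 0 <;> by_cases hb : b = 0 <;>
        simp [ha, hb, epsPair, eChar_zero]
    simp only [gaugeS, key]
    have h2 : ∀ a : GG n,
        (∑ b : GG n, if a = 0 then (if b = 0 then (n : ℂ) ^ 2 else 0) else 0)
        = if a = 0 then (n : ℂ) ^ 2 else 0 := by
      intro a
      by_cases ha : a = 0 <;> simp [ha]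
    simp_rw [h2]
    simp [Zspt, eChar_zero, Finset.sum_ite_eq']
    field_simp

end
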